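/- Let λ : [0,∞) → ℝ satisfy λ(1/√6) = 1/6 and, for all 0 ≤ ξ' < ξ, (λ(ξ) − λ(ξ'))/(ξ − ξ') ≤ √(2 + 2λ(ξ) + ξ²) − ξ. Suppose also λ(ξ) ≤ 1 for all ξ. Then for all ξ ≥ 1/√6, λ(ξ) ≤ (√(5/2) − 1/√6)·ξ − (√15 − 2)/6. -/
import Mathlib

set_option maxHeartbeats 1000000 in
theorem stmt_5 (l : ℝ → ℝ)
    (hval : l (1 / Real.sqrt 6) = 1/6)
    (hdiff : ∀ ξ' ξ : ℝ, 0 ≤ ξ' → ξ' < ξ →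
      (l ξ - l ξ') / (ξ - ξ') ≤ Real.sqrt (2 + 2 * l ξ + ξ^2) - ξ)
    (hub : ∀ ξ : ℝ, l ξ ≤ 1) :
    ∀ ξ : ℝ, 1 / Real.sqrt 6 ≤ ξ →
      l ξ ≤ (Real.sqrt (5/2) - 1 / Real.sqrt 6) * ξ - (Real.sqrt 15 - 2)/6 := by
  have h6 : (0:ℝ) < Real.sqrt 6 := Real.sqrt_pos.mpr (by norm_num)
  set b : ℝ := 1 / Real.sqrt 6 with hbdef
  have hb : 0 < b := by positivity
  have hb2 : b ^ 2 = 1 / 6 := by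
    rw [hbdef, div_pow, one_pow, Real.sq_sqrt (by norm_num : (0:ℝ) ≤ 6)]
  have hc0 : 0 ≤ Real.sqrt (5/2) := Real.sqrt_nonneg _
  have hc2 : Real.sqrt (5/2) ^ 2 = 5/2 := Real.sq_sqrt (by norm_num)
  have hc32 : (3:ℝ)/2 ≤ Real.sqrt (5/2) := by nlinarith [hc2, hc0]
  have hb12 : b ≤ 1/2 := by nlinarith [hb2, hb]
  have h36 : Real.sqrt 36 = 6 := by
    rw [show (36:ℝ) = 6^2 by norm_num, Real.sqrt_sq (by norm_num : (0:ℝ) ≤ 6)]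
  have key : Real.sqrt (5/2) * b = Real.sqrt 15 / 6 := by
    have h1 : 0 ≤ Real.sqrt (5/2) * b := by positivity
    rw [← Real.sqrt_sq h1, mul_pow, hc2, hb2,
      show (5/2 : ℝ) * (1/6) = 15/36 by norm_num,
      Real.sqrt_div (by norm_num : (0:ℝ) ≤ 15), h36]
  intro ξ hξ
  rcases eq_or_lt_of_le hξ with heq | hlt
  · rw [← heq, hval]
    nlinarith [key, hb2]
  · have h := hdiff b ξ hb.le hlt
    have hpos : 0 < ξ - b := sub_pos.mpr hlt
    rw [div_le_iff₀ hpos, hval] at h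
    by_contra hcon
    push_neg at hcon
    set L := l ξ with hL
    set X := 2 + 2 * L + ξ ^ 2 with hX
    have hcb : (Real.sqrt (5/2) - b) * b - (Real.sqrt 15 - 2)/6 = 1/6 := by
      nlinarith [key, hb2]
    have hcpos : 0 ≤ Real.sqrt (5/2) - b := by linarith
    have hM : 0 < L - 1/6 + (ξ - b) * ξ := by
      nlinarith [hcon, hcb, mul_nonneg hcpos hpos.le, mul_pos hpos (hb.trans hlt)]
    have hM' : L - 1/6 + (ξ - b) * ξ ≤ (ξ - b) * Real.sqrt X := by nlinarith [h]
    rcases le_or_gt 0 X with hX0 | hX0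
    · have hXs : Real.sqrt X ^ 2 = X := Real.sq_sqrt hX0
      have hsq : (L - 1/6 + (ξ - b) * ξ) ^ 2 ≤ (ξ - b) ^ 2 * X := by
        calc (L - 1/6 + (ξ - b) * ξ) ^ 2
            = (L - 1/6 + (ξ - b) * ξ) * (L - 1/6 + (ξ - b) * ξ) := sq (L - 1/6 + (ξ - b) * ξ)
          _ ≤ ((ξ - b) * Real.sqrt X) * ((ξ - b) * Real.sqrt X) :=
              mul_self_le_mul_self hM.le hM'
          _ = (ξ - b) ^ 2 * (Real.sqrt X ^ 2) := by ring
          _ = (ξ - b) ^ 2 * X := by rw [hXs]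
      have hid : (L - 1/6 + (ξ - b) * ξ) ^ 2 - (ξ - b) ^ 2 * X
          = (L + b * (ξ - 2*b)) ^ 2 - (5/2) * (ξ - b) ^ 2 := by
        rw [hX]
        linear_combination (2*L - 4*b^2 + 4*b*ξ - ξ^2 - 1/6) * hb2
      have hsq2 : (L + b * (ξ - 2*b)) ^ 2 ≤ (5/2) * (ξ - b) ^ 2 := by linarith
      have hstep : L + b * (ξ - 2*b) ≤ Real.sqrt (5/2) * (ξ - b) := by
        nlinarith [sq_nonneg (L + b * (ξ - 2*b) + Real.sqrt (5/2) * (ξ - b)),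
          hc2, mul_nonneg hc0 hpos.le, hsq2]
      ring_nf at hstep hcon key hb2
      linarith
    · have : Real.sqrt X = 0 := Real.sqrt_eq_zero_of_nonpos hX0.le
      rw [this] at hM'
      nlinarith [hM, hM', hpos]
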